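/- Let n>0 and a∈A. If φ∈D̂ₙ is XP⁻-consistent, then there are ψ₁,…,ψ_k∈N̂ₙ such that XP⁻⊢a∧φ≡⋁_{1≤i≤k}ψᵢ. -/

import Mathlib

attribute [local instance] Classical.propDecidable

mutual
/-- Path expressions of `XPath↓⁻` (no inequality tests in the language). -/
inductive PathExpr (A : Type) : Type
  | eps : PathExpr A
  | down : PathExpr A
  | test : NodeExpr A → PathExpr A
  | comp : PathExpr A → PathExpr A → PathExpr A
  | union : PathExpr A → PathExpr A → PathExpr A

/-- Node expressions of `XPath↓⁻` (no inequality tests in the language). -/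
inductive NodeExpr (A : Type) : Type
  | lab : A → NodeExpr A
  | neg : NodeExpr A → NodeExpr A
  | conj : NodeExpr A → NodeExpr A → NodeExpr A
  | diam : PathExpr A → NodeExpr A
  | eqTest : PathExpr A → PathExpr A → NodeExpr A
end

namespace XPathMinus

variable {A : Type}

/-- Defined disjunction `φ ∨ ψ := ¬(¬φ ∧ ¬ψ)`. -/
def nOr (φ ψ : NodeExpr A) : NodeExpr A := .neg (.conj (.neg φ) (.neg ψ))

/-- `⊤ := ⟨ε⟩`. -/
def topN : NodeExpr A := .diam .eps

/-- `⊥ := ¬⊤`. -/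
def botN : NodeExpr A := .neg topN

/-- `⊥̄ := [¬⟨ε⟩]`. -/
def botP : PathExpr A := .test (.neg (.diam .eps))

def bigOr (l : List (NodeExpr A)) : NodeExpr A := l.foldr nOr botN

def bigUnion (l : List (PathExpr A)) : PathExpr A := l.foldr PathExpr.union botP

/-- A data tree: a tree (connected, acyclic, unique parents except the root)
whose nodes carry labels from `A`, together with a partition of the nodes
(presented as an equivalence relation `eqd`). -/
structure DataTree (A : Type) where
  X : Type
  child : X → X → Prop
  root : X
  label : X → A
  eqd : X → X → Prop
  eqd_equiv : Equivalence eqd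
  parent_unique : ∀ ⦃x y z : X⦄, child x z → child y z → x = y
  root_no_parent : ∀ x : X, ¬ child x root
  reach : ∀ x : X, Relation.ReflTransGen child root x
  acyclic : ∀ x : X, ¬ Relation.TransGen child x x

mutual
/-- Semantics of path expressions. -/
def psem (T : DataTree A) : PathExpr A → T.X → T.X → Prop
  | .eps, x, y => x = y
  | .down, x, y => T.child x y
  | .test φ, x, y => x = y ∧ nsem T φ x
  | .comp α β, x, z => ∃ y, psem T α x y ∧ psem T β y z
  | .union α β, x, y => psem T α x y ∨ psem T β x y

/-- Semantics of node expressions. -/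
def nsem (T : DataTree A) : NodeExpr A → T.X → Prop
  | .lab a, x => T.label x = a
  | .neg φ, x => ¬ nsem T φ x
  | .conj φ ψ, x => nsem T φ x ∧ nsem T ψ x
  | .diam α, x => ∃ y, psem T α x y
  | .eqTest α β, x => ∃ y z, psem T α x y ∧ psem T β x z ∧ T.eqd y z
end

/-- Semantic equivalence of node expressions: same denotation in every data tree. -/
def nodeValid (φ ψ : NodeExpr A) : Prop :=
  ∀ (T : DataTree A) (x : T.X), nsem T φ x ↔ nsem T ψ x

/-- Semantic equivalence of path expressions: same denotation in every data tree. -/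
def pathValid (α β : PathExpr A) : Prop :=
  ∀ (T : DataTree A) (x y : T.X), psem T α x y ↔ psem T β x y

mutual
/-- Derivability of node equivalences in the axiomatic system `XP⁻`. -/
inductive NDer {A : Type} [Fintype A] : NodeExpr A → NodeExpr A → Prop
  | refl (φ : NodeExpr A) : NDer φ φ
  | symm {φ ψ : NodeExpr A} : NDer φ ψ → NDer ψ φ
  | trans {φ ψ ρ : NodeExpr A} : NDer φ ψ → NDer ψ ρ → NDer φ ρ
  | congr_neg {φ ψ : NodeExpr A} : NDer φ ψ → NDer (.neg φ) (.neg ψ)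
  | congr_conj {φ φ' ψ ψ' : NodeExpr A} :
      NDer φ φ' → NDer ψ ψ' → NDer (.conj φ ψ) (.conj φ' ψ')
  | congr_diam {α β : PathExpr A} : PDer α β → NDer (.diam α) (.diam β)
  | congr_eqTest {α α' β β' : PathExpr A} :
      PDer α α' → PDer β β' → NDer (.eqTest α β) (.eqTest α' β')
  | lbAx1 : NDer topN (bigOr ((Finset.univ : Finset A).toList.map NodeExpr.lab))
  | lbAx2 {a b : A} : a ≠ b → NDer botN (.conj (.lab a) (.lab b))
  | ndAx1 (φ ψ : NodeExpr A) :
      NDer φ (nOr (.neg (nOr (.neg φ) ψ)) (.neg (nOr (.neg φ) (.neg ψ))))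
  | ndAx2 (φ : NodeExpr A) : NDer (.diam (.test φ)) φ
  | ndAx3 (α β : PathExpr A) : NDer (.diam (.union α β)) (nOr (.diam α) (.diam β))
  | ndAx4 (α β : PathExpr A) : NDer (.diam (.comp α β)) (.diam (.comp α (.test (.diam β))))
  | eqAx1 (α β : PathExpr A) : NDer (.eqTest α β) (.eqTest β α)
  | eqAx2 (α β γ : PathExpr A) :
      NDer (.eqTest (.union α β) γ) (nOr (.eqTest α γ) (.eqTest β γ))
  | eqAx3 (φ : NodeExpr A) (α β : PathExpr A) :
      NDer (.conj φ (.eqTest α β)) (.eqTest (.comp (.test φ) α) β)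
  | eqAx4 (α β : PathExpr A) : NDer (nOr (.eqTest α β) (.diam α)) (.diam α)
  | eqAx5 (γ α β : PathExpr A) :
      NDer (nOr (.diam (.comp γ (.test (.eqTest α β)))) (.eqTest (.comp γ α) (.comp γ β)))
        (.eqTest (.comp γ α) (.comp γ β))
  | eqAx6 (α : PathExpr A) : NDer (.eqTest α α) (.diam α)
  | eqAx7 (α β : PathExpr A) :
      NDer (nOr (.conj (.eqTest α .eps) (.eqTest β .eps)) (.eqTest α β)) (.eqTest α β)
  | eqAx8 (α β γ : PathExpr A) :
      NDer (nOr (.eqTest α (.comp β (.test (.eqTest .eps γ)))) (.eqTest α (.comp β γ)))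
        (.eqTest α (.comp β γ))

/-- Derivability of path equivalences in the axiomatic system `XP⁻`. -/
inductive PDer {A : Type} [Fintype A] : PathExpr A → PathExpr A → Prop
  | refl (α : PathExpr A) : PDer α α
  | symm {α β : PathExpr A} : PDer α β → PDer β α
  | trans {α β γ : PathExpr A} : PDer α β → PDer β γ → PDer α γ
  | congr_test {φ ψ : NodeExpr A} : NDer φ ψ → PDer (.test φ) (.test ψ)
  | congr_comp {α α' β β' : PathExpr A} :
      PDer α α' → PDer β β' → PDer (.comp α β) (.comp α' β')
  | congr_union {α α' β β' : PathExpr A} :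
      PDer α α' → PDer β β' → PDer (.union α β) (.union α' β')
  | prAx1 (α β : PathExpr A) : PDer (.comp (.comp α (.test (.neg (.diam β)))) β) botP
  | prAx2 : PDer (.test topN) (.eps : PathExpr A)
  | prAx3 (φ ψ : NodeExpr A) : PDer (.test (nOr φ ψ)) (.union (.test φ) (.test ψ))
  | isAx1 (α β γ : PathExpr A) : PDer (.union (.union α β) γ) (.union α (.union β γ))
  | isAx2 (α β : PathExpr A) : PDer (.union α β) (.union β α)
  | isAx3 (α : PathExpr A) : PDer (.union α α) α
  | isAx4 (α β γ : PathExpr A) : PDer (.comp α (.comp β γ)) (.comp (.comp α β) γ)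
  | isAx5l (α : PathExpr A) : PDer (.comp .eps α) α
  | isAx5r (α : PathExpr A) : PDer (.comp α .eps) α
  | isAx6l (α β γ : PathExpr A) :
      PDer (.comp α (.union β γ)) (.union (.comp α β) (.comp α γ))
  | isAx6r (α β γ : PathExpr A) :
      PDer (.comp (.union α β) γ) (.union (.comp α γ) (.comp β γ))
  | isAx7 (α : PathExpr A) : PDer (.union botP α) α
end

/-- A node expression is `XP⁻`-consistent if it is not provably equivalent to `⊥`. -/
def NConsistent [Fintype A] (φ : NodeExpr A) : Prop := ¬ NDer φ botN

/-- A path expression is `XP⁻`-consistent if it is not provably equivalent to `⊥̄`. -/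
def PConsistent [Fintype A] (α : PathExpr A) : Prop := ¬ PDer α botP

/-- The normal form `a ∧ ⋀_{d ∈ C} d ∧ ⋀_{d ∈ D∖C} ¬d`, built along the canonical listing `D`. -/
noncomputable def mkNF (a : A) (C D : List (NodeExpr A)) : NodeExpr A :=
  D.foldl (fun acc d => .conj acc (if d ∈ C then d else .neg d)) (.lab a)

/-- The canonical lists of normal-form path expressions (first component)
and normal-form node expressions (second component) at each level. -/
noncomputable def NF (A : Type) [Fintype A] : ℕ → List (PathExpr A) × List (NodeExpr A)
  | 0 =>
    ([.eps],
      (Finset.univ : Finset A).toList.map fun a =>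
        NodeExpr.conj (.lab a) (.eqTest .eps .eps))
  | n+1 =>
    let P := (NF A n).1
    let N := (NF A n).2
    let P' : List (PathExpr A) :=
      .eps :: N.flatMap fun ψ => P.map fun β => PathExpr.comp .down (.comp (.test ψ) β)
    let D : List (NodeExpr A) :=
      P'.flatMap fun α => P'.map fun β => NodeExpr.eqTest α β
    let cands : List (NodeExpr A) :=
      D.sublists.flatMap fun C => (Finset.univ : Finset A).toList.map fun a => mkNF a C D
    (P', cands.filter fun φ => decide (NConsistent φ))

/-- `P̂ₙ`: normal-form path expressions of level `n`. -/
noncomputable def Pnf (A : Type) [Fintype A] (n : ℕ) : Set (PathExpr A) :=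
  {α | α ∈ (NF A n).1}

/-- `N̂ₙ`: normal-form node expressions of level `n`. -/
noncomputable def Nnf (A : Type) [Fintype A] (n : ℕ) : Set (NodeExpr A) :=
  {φ | φ ∈ (NF A n).2}

/-- `D̂ₙ`: data-aware diamonds between normal-form paths of level `n`. -/
noncomputable def Dnf (A : Type) [Fintype A] (n : ℕ) : Set (NodeExpr A) :=
  {φ | ∃ α ∈ Pnf A n, ∃ β ∈ Pnf A n, φ = NodeExpr.eqTest α β}

/-- The conjuncts of a node expression (flattening `∧`). -/
def conjuncts : NodeExpr A → List (NodeExpr A)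
  | .conj φ ψ => conjuncts φ ++ conjuncts ψ
  | φ => [φ]

/-- `δ` is a conjunct of `ψ`. -/
def IsConjunct (δ ψ : NodeExpr A) : Prop := δ ∈ conjuncts ψ

/-- Length of a path expression. -/
def plen : PathExpr A → ℕ
  | .eps => 0
  | .down => 1
  | .test _ => 0
  | .comp α β => plen α + plen β
  | .union α β => max (plen α) (plen β)

mutual
/-- Downward depth of a node expression. -/
def ndd : NodeExpr A → ℕ
  | .lab _ => 0
  | .neg φ => ndd φ
  | .conj φ ψ => max (ndd φ) (ndd ψ)
  | .diam α => pdd α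
  | .eqTest α β => max (pdd α) (pdd β)

/-- Downward depth of a path expression. -/
def pdd : PathExpr A → ℕ
  | .eps => 0
  | .down => 1
  | .test φ => ndd φ
  | .comp α β => max (max (pdd α) (pdd β)) (plen α + pdd β)
  | .union α β => max (pdd α) (pdd β)
end

/-- The path `↓[ψ]α`. -/
def dPath (ψ : NodeExpr A) (α : PathExpr A) : PathExpr A :=
  .comp .down (.comp (.test ψ) α)

/-- A path expression whose leftmost symbol is `↓`. -/
def startsWithDown : PathExpr A → Prop
  | .down => True
  | .comp α _ => startsWithDown α
  | _ => False

end XPathMinus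


/-!
Split `a` over all sign patterns `C` on `D̂ₙ`: `a ∧ ⟨α=β⟩` is the disjunction of the
`mkNF a C D̂ₙ ∧ ⟨α=β⟩`. Such a disjunct is contradictory when `⟨α=β⟩ ∉ C`, and otherwise
collapses to `mkNF a C D̂ₙ`, which lies in `N̂ₙ` unless it is contradictory as well. What remains
is to see that some disjunct survives, i.e. that `a ∧ ⟨α=β⟩` is consistent. Relabelling the
current node to `a` is a syntactic translation that preserves `XP⁻`-derivability and sends `a`
to `⊤`; it fixes `⟨α=β⟩` because for `n > 0` every path of `P̂ₙ` is `ε` or starts with `↓`. So a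
derivation of `a ∧ ⟨α=β⟩ ≡ ⊥` would translate into one of `⟨α=β⟩ ≡ ⊥`.
-/

namespace XPathMinus

section Derivations

variable {A : Type} [Fintype A]

namespace NDer

variable {x x' y y' : NodeExpr A}

theorem or_congr (hx : NDer x x') (hy : NDer y y') : NDer (nOr x y) (nOr x' y') :=
  (congr_conj hx.congr_neg hy.congr_neg).congr_neg

/-- Disjunction is reflected into path union, where the semiring axioms live. -/
theorem or_eq_diam_union (x y : NodeExpr A) :
    NDer (nOr x y) (.diam (.union (.test x) (.test y))) :=
  (ndAx2 _).symm.trans (congr_diam (PDer.prAx3 x y))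

theorem or_comm (x y : NodeExpr A) : NDer (nOr x y) (nOr y x) :=
  (or_eq_diam_union x y).trans ((congr_diam (PDer.isAx2 _ _)).trans (or_eq_diam_union y x).symm)

theorem or_assoc (x y z : NodeExpr A) : NDer (nOr (nOr x y) z) (nOr x (nOr y z)) :=
  (or_eq_diam_union _ z).trans <|
    (congr_diam (PDer.congr_union (PDer.prAx3 x y) (.refl _))).trans <|
    (congr_diam (PDer.isAx1 _ _ _)).trans <|
    (congr_diam (PDer.congr_union (.refl _) (PDer.prAx3 y z).symm)).trans
    (or_eq_diam_union x (nOr y z)).symm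

theorem or_self (x : NodeExpr A) : NDer (nOr x x) x :=
  (or_eq_diam_union x x).trans ((congr_diam (PDer.isAx3 _)).trans (ndAx2 x))

theorem bot_or (x : NodeExpr A) : NDer (nOr botN x) x :=
  (or_eq_diam_union _ x).trans ((congr_diam (PDer.isAx7 _)).trans (ndAx2 x))

theorem or_bot (x : NodeExpr A) : NDer (nOr x botN) x := (or_comm x botN).trans (bot_or x)

/- From here on the derivations follow Huntington's proof that his axiom `ndAx1`, together
with commutativity and associativity of `∨`, axiomatises Boolean algebras. -/

theorem huntington_self (x : NodeExpr A) :
    NDer x (nOr (.neg (nOr (.neg x) x)) (.neg (.neg x))) :=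
  (ndAx1 x x).trans (or_congr (.refl _) (congr_neg (or_self (.neg x))))

theorem or_neg_neg_self (x : NodeExpr A) : NDer (nOr x (.neg (.neg x))) x :=
  (or_congr (huntington_self x) (.refl _)).trans <| (or_assoc _ _ _).trans <|
    (or_congr (.refl _) (or_self _)).trans (huntington_self x).symm

theorem neg_neg (x : NodeExpr A) : NDer (.neg (.neg x)) x := by
  have hnn : NDer (NodeExpr.neg (.neg x))
      (nOr (.neg (nOr x (.neg x)))
        (.neg (nOr (.neg (.neg (.neg x))) (.neg (nOr x (.neg x)))))) := by
    have hem : NDer (nOr (NodeExpr.neg (.neg (.neg x))) (nOr x (.neg x))) (nOr x (.neg x)) :=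
      (or_comm _ _).trans <| (or_assoc _ _ _).trans <| or_congr (.refl x) (or_neg_neg_self _)
    exact (ndAx1 _ (nOr x (.neg x))).trans (or_congr hem.congr_neg (.refl _))
  have hx : NDer x (nOr (.neg (nOr x (.neg x))) (.neg (.neg x))) :=
    (huntington_self x).trans (or_congr (congr_neg (or_comm (.neg x) x)) (.refl _))
  exact (hx.trans <| (or_congr (.refl _) hnn).trans <| (or_assoc _ _ _).symm.trans <|
    (or_congr (or_self _) (.refl _)).trans hnn.symm).symm

theorem eq_bot_of_or_eq_bot {x y : NodeExpr A} (h : NDer (nOr x y) botN) : NDer x botN :=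
  (bot_or x).symm.trans <| (or_congr h.symm (.refl x)).trans <| (or_assoc _ _ _).trans <|
    (or_congr (.refl x) (or_comm y x)).trans <| (or_assoc x x y).symm.trans <|
    (or_congr (or_self x) (.refl y)).trans h

theorem neg_bot : NDer (NodeExpr.neg (botN : NodeExpr A)) topN := neg_neg topN

theorem top_or (x : NodeExpr A) : NDer (nOr topN x) topN := by
  have h : NDer (botN : NodeExpr A) (nOr (.neg (nOr topN x)) (.neg (nOr topN (.neg x)))) :=
    (ndAx1 botN x).trans (or_congr (congr_neg (or_congr neg_bot (.refl _)))
      (congr_neg (or_congr neg_bot (.refl _))))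
  exact (neg_neg _).symm.trans ((eq_bot_of_or_eq_bot h.symm).congr_neg.trans neg_bot)

theorem or_neg_self (x : NodeExpr A) : NDer (nOr x (.neg x)) topN :=
  ((ndAx1 topN x).trans <|
    (or_congr (congr_neg (bot_or x)) (congr_neg (bot_or (.neg x)))).trans <|
    (or_congr (.refl _) (neg_neg x)).trans (or_comm _ _)).symm

theorem neg_or_neg (x y : NodeExpr A) : NDer (.neg (nOr (.neg x) (.neg y))) (.conj x y) :=
  (neg_neg _).trans (congr_conj (neg_neg x) (neg_neg y))

theorem neg_or (x y : NodeExpr A) : NDer (.neg (nOr x y)) (.conj (.neg x) (.neg y)) :=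
  neg_neg _

theorem neg_conj (x y : NodeExpr A) : NDer (.neg (.conj x y)) (nOr (.neg x) (.neg y)) :=
  congr_neg (congr_conj (neg_neg x).symm (neg_neg y).symm)

theorem split (x y : NodeExpr A) : NDer x (nOr (.conj x y) (.conj x (.neg y))) :=
  ((ndAx1 x y).trans (or_congr
    ((congr_neg (or_congr (.refl _) (neg_neg y).symm)).trans (neg_or_neg x (.neg y)))
    (neg_or_neg x y))).trans (or_comm _ _)

theorem conj_comm (x y : NodeExpr A) : NDer (.conj x y) (.conj y x) :=
  (neg_or_neg x y).symm.trans ((or_comm _ _).congr_neg.trans (neg_or_neg y x))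

theorem conj_assoc (x y z : NodeExpr A) : NDer (.conj (.conj x y) z) (.conj x (.conj y z)) :=
  (neg_or_neg _ z).symm.trans <|
    ((or_congr (neg_conj x y) (.refl _)).congr_neg).trans <|
    ((or_assoc _ _ _).congr_neg).trans <|
    ((or_congr (.refl _) (neg_conj y z).symm).congr_neg).trans (neg_or_neg x (.conj y z))

theorem conj_top (x : NodeExpr A) : NDer (.conj x topN) x :=
  (neg_or_neg x topN).symm.trans <| ((or_comm _ _).congr_neg).trans <|
    ((bot_or _).congr_neg).trans (neg_neg x)

theorem top_conj (x : NodeExpr A) : NDer (.conj topN x) x := (conj_comm _ _).trans (conj_top x)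

theorem conj_bot (x : NodeExpr A) : NDer (.conj x botN) botN :=
  (neg_or_neg x botN).symm.trans <| ((or_congr (.refl _) neg_bot).congr_neg).trans
    ((or_comm _ _).trans (top_or _)).congr_neg

theorem bot_conj (x : NodeExpr A) : NDer (.conj botN x) botN := (conj_comm _ _).trans (conj_bot x)

theorem conj_neg_self (x : NodeExpr A) : NDer (.conj x (.neg x)) botN :=
  (neg_or_neg x (.neg x)).symm.trans <| ((or_congr (.refl _) (neg_neg x)).congr_neg).trans <|
    ((or_comm _ _).congr_neg).trans ((or_neg_self x).congr_neg)

theorem neg_conj_self (x : NodeExpr A) : NDer (.conj (.neg x) x) botN :=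
  (conj_comm _ _).trans (conj_neg_self x)

theorem conj_self (x : NodeExpr A) : NDer (.conj x x) x :=
  (neg_or_neg x x).symm.trans ((or_self _).congr_neg.trans (neg_neg x))

theorem or_conj_self (x y : NodeExpr A) : NDer (nOr x (.conj x y)) x :=
  (or_congr (split x y) (.refl _)).trans <| (or_assoc _ _ _).trans <|
    (or_congr (.refl _) (or_comm _ _)).trans <| (or_assoc _ _ _).symm.trans <|
    (or_congr (or_self _) (.refl _)).trans (split x y).symm

theorem conj_or_self (x y : NodeExpr A) : NDer (.conj x (nOr x y)) x :=
  (neg_or_neg x (nOr x y)).symm.trans <|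
    ((or_congr (.refl _) (neg_or x y)).congr_neg).trans <|
    ((or_conj_self (.neg x) (.neg y)).congr_neg).trans (neg_neg x)

theorem neg_conj_or_self (y z : NodeExpr A) :
    NDer (.conj (.neg y) (nOr y z)) (.conj (.neg y) z) := by
  have hz : NDer (.conj (.conj (.neg y) (nOr y z)) z) (.conj (.neg y) z) :=
    (conj_assoc _ _ _).trans <| congr_conj (.refl _) <|
      (conj_comm _ z).trans ((congr_conj (.refl z) (or_comm y z)).trans (conj_or_self z y))
  have hnz : NDer (.conj (.conj (.neg y) (nOr y z)) (.neg z)) botN :=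
    (congr_conj (conj_comm _ _) (.refl _)).trans <| (conj_assoc _ _ _).trans <|
      (congr_conj (.refl _) (neg_or y z).symm).trans (conj_neg_self (nOr y z))
  exact (split _ z).trans <| (or_congr hz hnz).trans (or_bot _)

theorem conj_right_comm (x y z : NodeExpr A) :
    NDer (.conj (.conj x y) z) (.conj (.conj x z) y) :=
  (conj_assoc x y z).trans <| (congr_conj (.refl x) (conj_comm y z)).trans (conj_assoc x z y).symm

theorem conj_or_left (x y z : NodeExpr A) :
    NDer (.conj x (nOr y z)) (nOr (.conj x y) (.conj x z)) := by
  have hy : NDer (.conj (.conj x (nOr y z)) y) (.conj x y) :=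
    (conj_assoc _ _ _).trans <| congr_conj (.refl _) <| (conj_comm _ y).trans (conj_or_self y z)
  have hny : NDer (.conj (.conj x (nOr y z)) (.neg y)) (.conj x (.conj (.neg y) z)) :=
    (conj_assoc _ _ _).trans <| congr_conj (.refl _) <|
      (conj_comm _ _).trans (neg_conj_or_self y z)
  have hxzy : NDer (.conj (.conj x z) y) (.conj (.conj x y) z) :=
    (conj_assoc x z y).trans ((congr_conj (.refl x) (conj_comm z y)).trans (conj_assoc x y z).symm)
  have hrhs : NDer (nOr (.conj x y) (.conj x z)) (nOr (.conj x y) (.conj x (.conj (.neg y) z))) :=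
    (or_congr (.refl _) (split (.conj x z) y)).trans <| (or_assoc _ _ _).symm.trans <|
      or_congr ((or_congr (.refl _) hxzy).trans (or_conj_self (.conj x y) z))
        ((conj_assoc x z (.neg y)).trans (congr_conj (.refl x) (conj_comm z (.neg y))))
  exact ((split _ y).trans (or_congr hy hny)).trans hrhs.symm

theorem conj_or_right (x y z : NodeExpr A) :
    NDer (.conj (nOr x y) z) (nOr (.conj x z) (.conj y z)) :=
  (conj_comm _ _).trans ((conj_or_left z x y).trans (or_congr (conj_comm z x) (conj_comm z y)))

end NDer

def NLe (x y : NodeExpr A) : Prop := NDer (nOr x y) y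

namespace NLe

variable {x x' y y' z : NodeExpr A}

theorem trans (h₁ : NLe x y) (h₂ : NLe y z) : NLe x z :=
  (NDer.or_congr (.refl x) h₂.symm).trans <| (NDer.or_assoc _ _ _).symm.trans <|
    (NDer.or_congr h₁ (.refl z)).trans h₂

theorem or_le (h₁ : NLe x z) (h₂ : NLe y z) : NLe (nOr x y) z :=
  (NDer.or_assoc x y z).trans ((NDer.or_congr (.refl x) h₂).trans h₁)

theorem congr (hx : NDer x x') (hy : NDer y y') (h : NLe x y) : NLe x' y' :=
  (NDer.or_congr hx.symm hy.symm).trans (NDer.trans h hy)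

theorem conj_le_left (x y : NodeExpr A) : NLe (.conj x y) x :=
  (NDer.or_comm _ x).trans (NDer.or_conj_self x y)

theorem conj_le_right (x y : NodeExpr A) : NLe (.conj x y) y :=
  congr (NDer.conj_comm y x) (.refl y) (conj_le_left y x)

theorem conj_eq (h : NLe x y) : NDer (.conj x y) x :=
  (NDer.congr_conj (.refl x) h.symm).trans (NDer.conj_or_self x y)

theorem conj_neg_eq_bot (h : NLe x y) : NDer (.conj x (.neg y)) botN :=
  (NDer.congr_conj h.conj_eq.symm (.refl _)).trans <| (NDer.conj_assoc _ _ _).trans <|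
    (NDer.congr_conj (.refl x) (NDer.conj_neg_self y)).trans (NDer.conj_bot x)

theorem neg (h : NLe x y) : NLe (.neg y) (.neg x) :=
  (NDer.neg_conj y x).symm.trans <| ((NDer.conj_comm y x).congr_neg).trans (h.conj_eq.congr_neg)

end NLe

def PLe (α β : PathExpr A) : Prop := PDer (.union α β) β

namespace PDer

theorem union_bot (α : PathExpr A) : PDer (.union α botP) α := (isAx2 _ _).trans (isAx7 α)

theorem le {α β : PathExpr A} (h : PDer α β) : PLe α β := (congr_union h (.refl _)).trans (isAx3 β)

theorem union_swap (α β γ δ : PathExpr A) :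
    PDer (.union (.union α β) (.union γ δ)) (.union (.union α γ) (.union β δ)) :=
  (isAx1 _ _ _).trans <| (congr_union (.refl α) (isAx1 β γ δ).symm).trans <|
    (congr_union (.refl α) (congr_union (isAx2 β γ) (.refl δ))).trans <|
    (congr_union (.refl α) (isAx1 γ β δ)).trans (isAx1 α γ _).symm

end PDer

namespace PLe

variable {α α' β β' γ : PathExpr A}

theorem trans (h₁ : PLe α β) (h₂ : PLe β γ) : PLe α γ :=
  (PDer.congr_union (.refl α) h₂.symm).trans <| (PDer.isAx1 _ _ _).symm.trans <|
    (PDer.congr_union h₁ (.refl γ)).trans h₂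

theorem eq_bot (h : PLe α botP) : PDer α botP := (PDer.union_bot α).symm.trans h

theorem le_union_left (α β : PathExpr A) : PLe α (.union α β) :=
  (PDer.isAx1 α α β).symm.trans (PDer.congr_union (PDer.isAx3 α) (.refl β))

theorem le_union_right (α β : PathExpr A) : PLe β (.union α β) :=
  (PDer.isAx1 β α β).symm.trans ((PDer.congr_union (PDer.isAx2 β α) (.refl β)).trans
    ((PDer.isAx1 α β β).trans (PDer.congr_union (.refl α) (PDer.isAx3 β))))

theorem union_le (h₁ : PLe α γ) (h₂ : PLe β γ) : PLe (.union α β) γ :=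
  (PDer.isAx1 α β γ).trans ((PDer.congr_union (.refl α) h₂).trans h₁)

theorem congr (hα : PDer α α') (hβ : PDer β β') (h : PLe α β) : PLe α' β' :=
  (PDer.congr_union hα.symm hβ.symm).trans (PDer.trans h hβ)

theorem comp_right (γ : PathExpr A) (h : PLe α α') : PLe (.comp α γ) (.comp α' γ) :=
  (PDer.isAx6r α α' γ).symm.trans (PDer.congr_comp h (.refl _))

theorem test {x y : NodeExpr A} (h : NLe x y) : PLe (.test x) (.test y) :=
  (PDer.prAx3 x y).symm.trans (PDer.congr_test h)

theorem diam (h : PLe α β) : NLe (.diam α) (.diam β) :=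
  (NDer.ndAx3 α β).symm.trans (NDer.congr_diam h)

theorem eqTest_left (β : PathExpr A) (h : PLe α α') : NLe (.eqTest α β) (.eqTest α' β) :=
  (NDer.eqAx2 α α' β).symm.trans (NDer.congr_eqTest h (.refl _))

theorem eqTest_right (α : PathExpr A) (h : PLe β β') : NLe (.eqTest α β) (.eqTest α β') :=
  (NDer.or_congr (NDer.eqAx1 _ _) (NDer.eqAx1 _ _)).trans
    (NDer.trans (eqTest_left α h) (NDer.eqAx1 _ _))

theorem eqTest_mono (hα : PLe α α') (hβ : PLe β β') : NLe (.eqTest α β) (.eqTest α' β') :=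
  (eqTest_left β hα).trans (eqTest_right α' hβ)

end PLe

namespace PDer

theorem test_neg_diam_comp (β : PathExpr A) : PDer (.comp (.test (.neg (.diam β))) β) botP :=
  (congr_comp (isAx5l _).symm (.refl _)).trans (prAx1 .eps β)

theorem test_neg_comp_test (x : NodeExpr A) : PDer (.comp (.test (.neg x)) (.test x)) botP :=
  (congr_comp (congr_test (NDer.congr_neg (NDer.ndAx2 x).symm)) (.refl _)).trans
    (test_neg_diam_comp (.test x))

theorem test_comp_test_neg (x : NodeExpr A) : PDer (.comp (.test x) (.test (.neg x))) botP :=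
  (congr_comp (congr_test (NDer.neg_neg x).symm) (.refl _)).trans (test_neg_comp_test (.neg x))

theorem comp_bot (γ : PathExpr A) : PDer (.comp γ botP) botP :=
  (isAx5r _).symm.trans (prAx1 γ .eps)

theorem test_comp_test (x y : NodeExpr A) :
    PDer (.comp (.test x) (.test y)) (.test (.conj x y)) := by
  have hsplit : PDer (.test x) (.union (.test (.conj x y)) (.test (.conj x (.neg y)))) :=
    (congr_test (NDer.split x y)).trans (prAx3 _ _)
  have hneg : PDer (.comp (.test (.conj x (.neg y))) (.test y)) botP :=
    PLe.eq_bot <| (PLe.comp_right _ (PLe.test (NLe.conj_le_right x (.neg y)))).trans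
      (test_neg_comp_test y).le
  have hneg' : PDer (.comp (.test (.conj x y)) (.test (.neg y))) botP :=
    PLe.eq_bot <| (PLe.comp_right _ (PLe.test (NLe.conj_le_right x y))).trans
      (test_comp_test_neg y).le
  have hpos : PDer (.comp (.test (.conj x y)) (.test y)) (.test (.conj x y)) :=
    (union_bot _).symm.trans <| (congr_union (.refl _) hneg'.symm).trans <|
      (isAx6l _ _ _).symm.trans <|
      (congr_comp (.refl _) ((prAx3 y (.neg y)).symm.trans
        ((congr_test (NDer.or_neg_self y)).trans prAx2))).trans (isAx5r _)
  exact (congr_comp hsplit (.refl _)).trans <| (isAx6r _ _ _).trans <|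
    (congr_union hpos hneg).trans (union_bot _)

theorem bot_comp (γ : PathExpr A) : PDer (.comp botP γ) botP := by
  have hbot : PDer (botP : PathExpr A) (.comp (.test botN) (.test (.neg (.diam γ)))) :=
    (congr_test (NDer.bot_conj (.neg (.diam γ))).symm).trans (test_comp_test botN _).symm
  exact (congr_comp hbot (.refl _)).trans <| (isAx4 _ _ _).symm.trans <|
    (congr_comp (.refl _) (test_neg_diam_comp γ)).trans (comp_bot (.test botN))

end PDer

namespace NDer

theorem diam_bot : NDer (.diam (botP : PathExpr A)) botN := ndAx2 botN

theorem diam_test_comp (x : NodeExpr A) (γ : PathExpr A) :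
    NDer (.diam (.comp (.test x) γ)) (.conj x (.diam γ)) :=
  (ndAx4 _ _).trans <| (congr_diam (PDer.test_comp_test x (.diam γ))).trans (ndAx2 _)

theorem diam_test_union (x : NodeExpr A) (β : PathExpr A) :
    NDer (.diam (.union (.test x) β)) (nOr x (.diam β)) :=
  (ndAx3 _ _).trans (or_congr (ndAx2 x) (.refl _))

theorem eqTest_union_right (α β β' : PathExpr A) :
    NDer (.eqTest α (.union β β')) (nOr (.eqTest α β) (.eqTest α β')) :=
  (eqAx1 _ _).trans ((eqAx2 β β' α).trans (or_congr (eqAx1 _ _) (eqAx1 _ _)))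

end NDer

end Derivations

section Relabel

variable {A : Type}

/- `relabel a φ` holds at a node `x` iff `φ` holds at `x` after the label of `x` is changed to
`a`. A path `α` starting at `x` either stays at `x`, which it can do exactly when
`relabelStay a α` holds, or first leaves `x` through `↓`, as described by `relabelMove a α`;
below `x` nothing is relabelled. -/
mutual
noncomputable def relabel (a : A) : NodeExpr A → NodeExpr A
  | .lab c => if c = a then topN else botN
  | .neg χ => .neg (relabel a χ)
  | .conj χ ρ => .conj (relabel a χ) (relabel a ρ)
  | .diam α => .diam (.union (.test (relabelStay a α)) (relabelMove a α))
  | .eqTest α β => .eqTest (.union (.test (relabelStay a α)) (relabelMove a α))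
      (.union (.test (relabelStay a β)) (relabelMove a β))

noncomputable def relabelStay (a : A) : PathExpr A → NodeExpr A
  | .eps => topN
  | .down => botN
  | .test χ => relabel a χ
  | .comp α β => .conj (relabelStay a α) (relabelStay a β)
  | .union α β => nOr (relabelStay a α) (relabelStay a β)

noncomputable def relabelMove (a : A) : PathExpr A → PathExpr A
  | .eps => botP
  | .down => .down
  | .test _ => botP
  | .comp α β => .union (.comp (.test (relabelStay a α)) (relabelMove a β))
      (.comp (relabelMove a α) β)
  | .union α β => .union (relabelMove a α) (relabelMove a β)
end

noncomputable def relabelPath (a : A) (α : PathExpr A) : PathExpr A :=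
  .union (.test (relabelStay a α)) (relabelMove a α)

variable (a : A) (α β : PathExpr A) (x y : NodeExpr A)

theorem relabel_lab_self : relabel a (.lab a) = topN := by
  simp only [relabel, if_true]

theorem relabel_diam : relabel a (.diam α) = .diam (relabelPath a α) := by
  simp only [relabel, relabelPath]

theorem relabel_eqTest :
    relabel a (.eqTest α β) = .eqTest (relabelPath a α) (relabelPath a β) := by
  simp only [relabel, relabelPath]

theorem relabel_conj : relabel a (.conj x y) = .conj (relabel a x) (relabel a y) := by
  simp only [relabel]

theorem relabel_or : relabel a (nOr x y) = nOr (relabel a x) (relabel a y) := by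
  simp only [nOr, relabel]

end Relabel

section RelabelSound

variable {A : Type} [Fintype A] (a : A)

theorem relabel_top : NDer (relabel a topN) topN := by
  simp only [topN, relabel, relabelStay, relabelMove]
  exact (NDer.congr_diam (PDer.union_bot _)).trans (NDer.ndAx2 topN)

theorem relabel_bot : NDer (relabel a botN) botN := (relabel_top a).congr_neg

theorem relabelPath_union (α β : PathExpr A) :
    PDer (relabelPath a (.union α β)) (.union (relabelPath a α) (relabelPath a β)) := by
  simp only [relabelPath, relabelStay, relabelMove]
  exact (PDer.congr_union (PDer.prAx3 _ _) (.refl _)).trans (PDer.union_swap _ _ _ _)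

theorem relabelPath_eps : PDer (relabelPath a .eps) (.eps : PathExpr A) := by
  simp only [relabelPath, relabelStay, relabelMove]
  exact (PDer.union_bot _).trans PDer.prAx2

theorem relabelPath_down_comp (δ : PathExpr A) :
    PDer (relabelPath a (.comp .down δ)) (.comp .down δ) := by
  simp only [relabelPath, relabelStay, relabelMove]
  exact (PDer.congr_union (PDer.congr_test (NDer.bot_conj _))
    (PDer.congr_union (PDer.bot_comp _) (.refl _))).trans
    ((PDer.congr_union (.refl _) (PDer.isAx7 _)).trans (PDer.isAx7 _))

theorem relabelStay_le (β : PathExpr A) : NLe (relabelStay a β) (.diam (relabelPath a β)) :=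
  NLe.congr (NDer.ndAx2 _) (.refl _) (PLe.le_union_left _ _).diam

theorem relabelMove_le (β : PathExpr A) :
    NLe (.diam (relabelMove a β)) (.diam (relabelPath a β)) :=
  (PLe.le_union_right _ _).diam

theorem relabelPath_comp_stay_le (γ δ : PathExpr A) :
    PLe (.comp (.test (relabelStay a γ)) (relabelPath a δ)) (relabelPath a (.comp γ δ)) := by
  simp only [relabelPath, relabelStay, relabelMove]
  refine PLe.congr ((PDer.isAx6l _ _ _).trans
    (PDer.congr_union (PDer.test_comp_test _ _) (.refl _))).symm (.refl _) ?_
  exact PLe.union_le (PLe.le_union_left _ _)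
    ((PLe.le_union_left _ _).trans (PLe.le_union_right _ _))

theorem relabelPath_comp_move_le (γ δ : PathExpr A) :
    PLe (.comp (relabelMove a γ) δ) (relabelPath a (.comp γ δ)) := by
  simp only [relabelPath, relabelStay, relabelMove]
  exact (PLe.le_union_right _ _).trans (PLe.le_union_right _ _)

theorem relabel_bigOr_lab {L : List A} (h : a ∈ L) :
    NDer (relabel a (bigOr (L.map .lab))) topN := by
  induction L with
  | nil => simp at h
  | cons c L ih =>
    change NDer (relabel a (nOr (.lab c) (bigOr (L.map .lab)))) topN
    rw [relabel_or]
    by_cases hc : c = a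
    · simp only [relabel, hc, if_true]
      exact NDer.top_or _
    · simp only [relabel, hc, if_false]
      exact (NDer.bot_or _).trans (ih ((List.mem_cons.1 h).resolve_left (Ne.symm hc)))

theorem relabel_lbAx1 :
    NDer (relabel a topN) (relabel a (bigOr ((Finset.univ : Finset A).toList.map .lab))) :=
  (relabel_top a).trans (relabel_bigOr_lab a (by simp)).symm

theorem relabel_lbAx2 {c d : A} (h : c ≠ d) :
    NDer (relabel a botN) (relabel a (.conj (.lab c) (.lab d))) := by
  refine (relabel_bot a).trans ?_
  simp only [relabel]
  by_cases hc : c = a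
  · simp only [hc, if_true, show d ≠ a from fun hd => h (hc.trans hd.symm), if_false]
    exact (NDer.conj_bot _).symm
  · simp only [hc, if_false]
    exact (NDer.bot_conj _).symm

theorem relabel_ndAx1 (φ ψ : NodeExpr A) :
    NDer (relabel a φ)
      (relabel a (nOr (.neg (nOr (.neg φ) ψ)) (.neg (nOr (.neg φ) (.neg ψ))))) := by
  simp only [nOr, relabel]
  exact NDer.ndAx1 _ _

theorem relabel_ndAx2 (φ : NodeExpr A) : NDer (relabel a (.diam (.test φ))) (relabel a φ) := by
  simp only [relabel, relabelStay, relabelMove]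
  exact (NDer.congr_diam (PDer.union_bot _)).trans (NDer.ndAx2 _)

theorem relabel_ndAx3 (α β : PathExpr A) :
    NDer (relabel a (.diam (.union α β))) (relabel a (nOr (.diam α) (.diam β))) := by
  simp only [relabel_or, relabel_diam]
  exact (NDer.congr_diam (relabelPath_union a α β)).trans (NDer.ndAx3 _ _)

theorem relabel_ndAx4 (α β : PathExpr A) :
    NDer (relabel a (.diam (.comp α β))) (relabel a (.diam (.comp α (.test (.diam β))))) := by
  have hl : NDer (relabel a (.diam (.comp α β)))
      (nOr (.conj (relabelStay a α) (relabelStay a β))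
        (nOr (.conj (relabelStay a α) (.diam (relabelMove a β)))
          (.diam (.comp (relabelMove a α) β)))) := by
    simp only [relabel, relabelStay, relabelMove]
    exact (NDer.diam_test_union _ _).trans
      (NDer.or_congr (.refl _) ((NDer.ndAx3 _ _).trans
        (NDer.or_congr (NDer.diam_test_comp _ _) (.refl _))))
  have hr : NDer (relabel a (.diam (.comp α (.test (.diam β)))))
      (nOr (nOr (.conj (relabelStay a α) (relabelStay a β))
          (.conj (relabelStay a α) (.diam (relabelMove a β))))
        (.diam (.comp (relabelMove a α) β))) := by
    simp only [relabel, relabelStay, relabelMove]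
    exact (NDer.diam_test_union _ _).trans <| NDer.or_congr
      ((NDer.congr_conj (.refl _) (NDer.diam_test_union _ _)).trans (NDer.conj_or_left _ _ _))
      ((NDer.ndAx3 _ _).trans <| (NDer.or_congr
        ((NDer.congr_diam (PDer.comp_bot _)).trans NDer.diam_bot)
        (NDer.ndAx4 _ β).symm).trans (NDer.bot_or _))
  exact hl.trans ((NDer.or_assoc _ _ _).symm.trans hr.symm)

theorem relabel_eqAx1 (α β : PathExpr A) :
    NDer (relabel a (.eqTest α β)) (relabel a (.eqTest β α)) := by
  simp only [relabel_eqTest]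
  exact NDer.eqAx1 _ _

theorem relabel_eqAx2 (α β γ : PathExpr A) :
    NDer (relabel a (.eqTest (.union α β) γ)) (relabel a (nOr (.eqTest α γ) (.eqTest β γ))) := by
  simp only [relabel_or, relabel_eqTest]
  exact (NDer.congr_eqTest (relabelPath_union a α β) (.refl _)).trans (NDer.eqAx2 _ _ _)

theorem relabel_eqAx3 (φ : NodeExpr A) (α β : PathExpr A) :
    NDer (relabel a (.conj φ (.eqTest α β))) (relabel a (.eqTest (.comp (.test φ) α) β)) := by
  have hpath : PDer (.comp (.test (relabel a φ)) (relabelPath a α))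
      (relabelPath a (.comp (.test φ) α)) := by
    simp only [relabelPath, relabelStay, relabelMove]
    exact (PDer.isAx6l _ _ _).trans <| PDer.congr_union (PDer.test_comp_test _ _)
      ((PDer.union_bot _).symm.trans (PDer.congr_union (.refl _) (PDer.bot_comp α).symm))
  simp only [relabel_eqTest]
  exact (NDer.eqAx3 _ _ _).trans (NDer.congr_eqTest hpath (.refl _))

theorem relabel_eqAx4 (α β : PathExpr A) :
    NDer (relabel a (nOr (.eqTest α β) (.diam α))) (relabel a (.diam α)) := by
  simp only [relabel_or, relabel_eqTest, relabel_diam]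
  exact NDer.eqAx4 _ _

theorem relabel_eqAx5 (γ α β : PathExpr A) :
    NDer (relabel a (nOr (.diam (.comp γ (.test (.eqTest α β))))
        (.eqTest (.comp γ α) (.comp γ β))))
      (relabel a (.eqTest (.comp γ α) (.comp γ β))) := by
  rw [relabel_or]
  have hsplit : NDer (relabel a (.diam (.comp γ (.test (.eqTest α β)))))
      (nOr (.conj (relabelStay a γ) (relabel a (.eqTest α β)))
        (.diam (.comp (relabelMove a γ) (.test (.eqTest α β))))) := by
    simp only [relabel_diam, relabelPath, relabelStay, relabelMove]
    exact (NDer.diam_test_union _ _).trans <| NDer.or_congr (.refl _) <| (NDer.ndAx3 _ _).trans <|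
      (NDer.or_congr ((NDer.congr_diam (PDer.comp_bot _)).trans NDer.diam_bot) (.refl _)).trans
        (NDer.bot_or _)
  have hstay : NLe (.conj (relabelStay a γ) (relabel a (.eqTest α β)))
      (relabel a (.eqTest (.comp γ α) (.comp γ β))) := by
    simp only [relabel_eqTest]
    refine NLe.congr ((NDer.diam_test_comp _ _).trans
      (NDer.congr_conj (.refl _) (NDer.ndAx2 _))) (.refl _) ?_
    exact NLe.trans (NDer.eqAx5 _ _ _)
      (PLe.eqTest_mono (relabelPath_comp_stay_le a γ α) (relabelPath_comp_stay_le a γ β))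
  have hmove : NLe (.diam (.comp (relabelMove a γ) (.test (.eqTest α β))))
      (relabel a (.eqTest (.comp γ α) (.comp γ β))) := by
    simp only [relabel_eqTest]
    exact NLe.trans (NDer.eqAx5 _ _ _)
      (PLe.eqTest_mono (relabelPath_comp_move_le a γ α) (relabelPath_comp_move_le a γ β))
  exact (NDer.or_congr hsplit (.refl _)).trans (NLe.or_le hstay hmove)

theorem relabel_eqAx6 (α : PathExpr A) :
    NDer (relabel a (.eqTest α α)) (relabel a (.diam α)) := by
  simp only [relabel_eqTest, relabel_diam]
  exact NDer.eqAx6 _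

theorem relabel_eqAx7 (α β : PathExpr A) :
    NDer (relabel a (nOr (.conj (.eqTest α .eps) (.eqTest β .eps)) (.eqTest α β)))
      (relabel a (.eqTest α β)) := by
  simp only [relabel_or, relabel_conj, relabel_eqTest]
  exact (NDer.or_congr (NDer.congr_conj (NDer.congr_eqTest (.refl _) (relabelPath_eps a))
      (NDer.congr_eqTest (.refl _) (relabelPath_eps a))) (.refl _)).trans (NDer.eqAx7 _ _)

theorem relabel_eqAx8 (α β γ : PathExpr A) :
    NDer (relabel a (nOr (.eqTest α (.comp β (.test (.eqTest .eps γ)))) (.eqTest α (.comp β γ))))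
      (relabel a (.eqTest α (.comp β γ))) := by
  rw [relabel_or]
  have hsplit : NDer (relabel a (.eqTest α (.comp β (.test (.eqTest .eps γ)))))
      (nOr (.eqTest (relabelPath a α)
          (.comp (.test (relabelStay a β)) (.test (relabel a (.eqTest .eps γ)))))
        (.eqTest (relabelPath a α) (.comp (relabelMove a β) (.test (.eqTest .eps γ))))) := by
    have hpath : PDer (relabelPath a (.comp β (.test (.eqTest .eps γ))))
        (.union (.comp (.test (relabelStay a β)) (.test (relabel a (.eqTest .eps γ))))
          (.comp (relabelMove a β) (.test (.eqTest .eps γ)))) := by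
      simp only [relabelPath, relabelStay, relabelMove]
      exact PDer.congr_union (PDer.test_comp_test _ _).symm
        ((PDer.congr_union (PDer.comp_bot _) (.refl _)).trans (PDer.isAx7 _))
    rw [relabel_eqTest]
    exact (NDer.congr_eqTest (.refl _) hpath).trans (NDer.eqTest_union_right _ _ _)
  have hstay : NLe (.eqTest (relabelPath a α)
        (.comp (.test (relabelStay a β)) (.test (relabel a (.eqTest .eps γ)))))
      (relabel a (.eqTest α (.comp β γ))) := by
    have hγ : NDer (relabel a (.eqTest .eps γ)) (.eqTest .eps (relabelPath a γ)) := by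
      rw [relabel_eqTest]
      exact NDer.congr_eqTest (relabelPath_eps a) (.refl _)
    rw [relabel_eqTest]
    refine NLe.congr (NDer.congr_eqTest (.refl _)
      (PDer.congr_comp (.refl _) (PDer.congr_test hγ))).symm (.refl _) ?_
    exact NLe.trans (NDer.eqAx8 _ _ _) (PLe.eqTest_right _ (relabelPath_comp_stay_le a β γ))
  have hmove : NLe (.eqTest (relabelPath a α) (.comp (relabelMove a β) (.test (.eqTest .eps γ))))
      (relabel a (.eqTest α (.comp β γ))) := by
    rw [relabel_eqTest]
    exact NLe.trans (NDer.eqAx8 _ _ _) (PLe.eqTest_right _ (relabelPath_comp_move_le a β γ))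
  exact (NDer.or_congr hsplit (.refl _)).trans (NLe.or_le hstay hmove)

def RelabelEquiv (α β : PathExpr A) : Prop :=
  NDer (relabelStay a α) (relabelStay a β) ∧ PDer (relabelMove a α) (relabelMove a β)

theorem relabel_prAx1 (α β : PathExpr A) :
    RelabelEquiv a (.comp (.comp α (.test (.neg (.diam β)))) β) botP := by
  constructor
  · simp only [relabelStay, relabel, ← relabelPath.eq_1]
    refine NDer.trans ?_ (relabel_bot a).symm
    exact (NDer.conj_assoc _ _ _).trans ((NDer.congr_conj (.refl _)
      ((NDer.conj_comm _ _).trans (relabelStay_le a β).conj_neg_eq_bot)).trans (NDer.conj_bot _))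
  · simp only [relabelStay, relabelMove, relabel, ← relabelPath.eq_1]
    have hstay : PDer (.comp (.test (.conj (relabelStay a α) (.neg (.diam (relabelPath a β)))))
        (relabelMove a β)) botP :=
      PLe.eq_bot <| (PLe.comp_right _ (PLe.test
        ((NLe.conj_le_right _ _).trans (relabelMove_le a β).neg))).trans
        (PDer.test_neg_diam_comp _).le
    have hmove : PDer (.comp (.union (.comp (.test (relabelStay a α)) botP)
        (.comp (relabelMove a α) (.test (.neg (.diam β))))) β) botP :=
      (PDer.isAx6r _ _ _).trans <| (PDer.congr_union
        ((PDer.congr_comp (PDer.comp_bot _) (.refl _)).trans (PDer.bot_comp β))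
        (PDer.prAx1 _ β)).trans (PDer.isAx3 botP)
    exact (PDer.congr_union hstay hmove).trans (PDer.isAx3 botP)

theorem relabel_prAx2 : RelabelEquiv a (.test topN) .eps :=
  ⟨relabel_top a, .refl _⟩

theorem relabel_prAx3 (φ ψ : NodeExpr A) :
    RelabelEquiv a (.test (nOr φ ψ)) (.union (.test φ) (.test ψ)) := by
  simp only [RelabelEquiv, relabelStay, relabelMove, relabel_or]
  exact ⟨.refl _, (PDer.isAx3 _).symm⟩

theorem relabel_isAx1 (α β γ : PathExpr A) :
    RelabelEquiv a (.union (.union α β) γ) (.union α (.union β γ)) :=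
  ⟨NDer.or_assoc _ _ _, PDer.isAx1 _ _ _⟩

theorem relabel_isAx2 (α β : PathExpr A) : RelabelEquiv a (.union α β) (.union β α) :=
  ⟨NDer.or_comm _ _, PDer.isAx2 _ _⟩

theorem relabel_isAx3 (α : PathExpr A) : RelabelEquiv a (.union α α) α :=
  ⟨NDer.or_self _, PDer.isAx3 _⟩

theorem relabel_isAx4 (α β γ : PathExpr A) :
    RelabelEquiv a (.comp α (.comp β γ)) (.comp (.comp α β) γ) := by
  refine ⟨(NDer.conj_assoc _ _ _).symm, ?_⟩
  simp only [relabelStay, relabelMove]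
  exact (PDer.congr_union ((PDer.isAx6l _ _ _).trans (PDer.congr_union
      ((PDer.isAx4 _ _ _).trans (PDer.congr_comp (PDer.test_comp_test _ _) (.refl _)))
      (PDer.isAx4 _ _ _))) (PDer.isAx4 _ _ _)).trans <|
    (PDer.isAx1 _ _ _).trans (PDer.congr_union (.refl _) (PDer.isAx6r _ _ _).symm)

theorem relabel_isAx5l (α : PathExpr A) : RelabelEquiv a (.comp .eps α) α := by
  refine ⟨NDer.top_conj _, ?_⟩
  simp only [relabelStay, relabelMove]
  exact (PDer.congr_union (PDer.congr_comp PDer.prAx2 (.refl _)) (PDer.bot_comp α)).trans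
    ((PDer.congr_union (PDer.isAx5l _) (.refl _)).trans (PDer.union_bot _))

theorem relabel_isAx5r (α : PathExpr A) : RelabelEquiv a (.comp α .eps) α := by
  refine ⟨NDer.conj_top _, ?_⟩
  simp only [relabelMove]
  exact (PDer.congr_union (PDer.comp_bot _) (PDer.isAx5r _)).trans (PDer.isAx7 _)

theorem relabel_isAx6l (α β γ : PathExpr A) :
    RelabelEquiv a (.comp α (.union β γ)) (.union (.comp α β) (.comp α γ)) := by
  refine ⟨NDer.conj_or_left _ _ _, ?_⟩
  simp only [relabelMove]
  exact (PDer.congr_union (PDer.isAx6l _ _ _) (PDer.isAx6l _ _ _)).trans (PDer.union_swap _ _ _ _)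

theorem relabel_isAx6r (α β γ : PathExpr A) :
    RelabelEquiv a (.comp (.union α β) γ) (.union (.comp α γ) (.comp β γ)) := by
  refine ⟨NDer.conj_or_right _ _ _, ?_⟩
  simp only [relabelStay, relabelMove]
  exact (PDer.congr_union ((PDer.congr_comp (PDer.prAx3 _ _) (.refl _)).trans
    (PDer.isAx6r _ _ _)) (PDer.isAx6r _ _ _)).trans (PDer.union_swap _ _ _ _)

theorem relabel_isAx7 (α : PathExpr A) : RelabelEquiv a (.union botP α) α :=
  ⟨(NDer.or_congr (relabel_bot a) (.refl _)).trans (NDer.bot_or _), PDer.isAx7 _⟩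

theorem relabel_congr {φ ψ : NodeExpr A} (h : NDer φ ψ) : NDer (relabel a φ) (relabel a ψ) :=
  NDer.rec (motive_1 := fun φ ψ _ => NDer (relabel a φ) (relabel a ψ))
    (motive_2 := fun α β _ => RelabelEquiv a α β)
    (fun _ => .refl _)
    (fun _ ih => ih.symm)
    (fun _ _ ih₁ ih₂ => ih₁.trans ih₂)
    (fun _ ih => ih.congr_neg)
    (fun _ _ ih₁ ih₂ => NDer.congr_conj ih₁ ih₂)
    (fun _ ih => NDer.congr_diam (PDer.congr_union (PDer.congr_test ih.1) ih.2))
    (fun _ _ ih₁ ih₂ => NDer.congr_eqTest (PDer.congr_union (PDer.congr_test ih₁.1) ih₁.2)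
      (PDer.congr_union (PDer.congr_test ih₂.1) ih₂.2))
    (relabel_lbAx1 a) (relabel_lbAx2 a) (relabel_ndAx1 a) (relabel_ndAx2 a) (relabel_ndAx3 a)
    (relabel_ndAx4 a) (relabel_eqAx1 a) (relabel_eqAx2 a) (relabel_eqAx3 a) (relabel_eqAx4 a)
    (relabel_eqAx5 a) (relabel_eqAx6 a) (relabel_eqAx7 a) (relabel_eqAx8 a)
    (fun _ => ⟨.refl _, .refl _⟩)
    (fun _ ih => ⟨ih.1.symm, ih.2.symm⟩)
    (fun _ _ ih₁ ih₂ => ⟨ih₁.1.trans ih₂.1, ih₁.2.trans ih₂.2⟩)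
    (fun _ ih => ⟨ih, .refl _⟩)
    (fun _ hβ ih₁ ih₂ => ⟨NDer.congr_conj ih₁.1 ih₂.1,
      PDer.congr_union (PDer.congr_comp (PDer.congr_test ih₁.1) ih₂.2) (PDer.congr_comp ih₁.2 hβ)⟩)
    (fun _ _ ih₁ ih₂ => ⟨NDer.or_congr ih₁.1 ih₂.1, PDer.congr_union ih₁.2 ih₂.2⟩)
    (relabel_prAx1 a) (relabel_prAx2 a) (relabel_prAx3 a) (relabel_isAx1 a) (relabel_isAx2 a)
    (relabel_isAx3 a) (relabel_isAx4 a) (relabel_isAx5l a) (relabel_isAx5r a) (relabel_isAx6l a)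
    (relabel_isAx6r a) (relabel_isAx7 a)
    h

end RelabelSound

section MkNF

variable {A : Type} (a : A) {C C' : List (NodeExpr A)}

theorem mkNF_append_singleton (D : List (NodeExpr A)) (d : NodeExpr A) :
    mkNF a C (D ++ [d]) = .conj (mkNF a C D) (if d ∈ C then d else .neg d) := by
  simp only [mkNF, List.foldl_append, List.foldl_cons, List.foldl_nil]

theorem mkNF_congr {D : List (NodeExpr A)} (h : ∀ d ∈ D, d ∈ C ↔ d ∈ C') :
    mkNF a C D = mkNF a C' D :=
  List.foldl_ext _ _ _ fun _ d hd => by simp only [h d hd]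

end MkNF

section NormalForm

variable {A : Type} [Fintype A]

theorem mkNF_conj_literal (a : A) (C : List (NodeExpr A)) {D : List (NodeExpr A)}
    {d : NodeExpr A} (hd : d ∈ D) :
    NDer (.conj (mkNF a C D) (if d ∈ C then d else .neg d)) (mkNF a C D) := by
  induction D using List.reverseRecOn with
  | nil => cases hd
  | append_singleton D e ih =>
    rw [mkNF_append_singleton]
    rcases List.mem_append.1 hd with hdD | hde
    · exact (NDer.conj_right_comm _ _ _).trans (NDer.congr_conj (ih hdD) (.refl _))
    · obtain rfl := List.mem_singleton.1 hde
      exact (NDer.conj_assoc _ _ _).trans (NDer.congr_conj (.refl _) (NDer.conj_self _))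

theorem mkNF_conj_of_mem (a : A) {C D : List (NodeExpr A)} {d : NodeExpr A} (hd : d ∈ D)
    (hdC : d ∈ C) : NDer (.conj (mkNF a C D) d) (mkNF a C D) := by
  simpa only [hdC, if_true] using mkNF_conj_literal a C hd

theorem mkNF_conj_of_not_mem (a : A) {C D : List (NodeExpr A)} {d : NodeExpr A} (hd : d ∈ D)
    (hdC : d ∉ C) : NDer (.conj (mkNF a C D) d) botN := by
  have hneg : NDer (.conj (mkNF a C D) (.neg d)) (mkNF a C D) := by
    simpa only [hdC, if_false] using mkNF_conj_literal a C hd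
  exact (NDer.congr_conj hneg.symm (.refl d)).trans <| (NDer.conj_assoc _ _ _).trans <|
    (NDer.congr_conj (.refl _) (NDer.neg_conj_self d)).trans (NDer.conj_bot _)

theorem NDer.bigOr_append (l₁ l₂ : List (NodeExpr A)) :
    NDer (bigOr (l₁ ++ l₂)) (nOr (bigOr l₁) (bigOr l₂)) := by
  induction l₁ with
  | nil => exact (bot_or _).symm
  | cons x l ih => exact (or_congr (.refl x) ih).trans (or_assoc x (bigOr l) (bigOr l₂)).symm

theorem NDer.bigOr_conj (l : List (NodeExpr A)) (τ : NodeExpr A) :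
    NDer (.conj (bigOr l) τ) (bigOr (l.map (.conj · τ))) := by
  induction l with
  | nil => exact bot_conj τ
  | cons x l ih => exact (conj_or_right _ _ _).trans (or_congr (.refl _) ih)

def DisjOf (P : NodeExpr A → Prop) (φ : NodeExpr A) : Prop :=
  ∃ l : List (NodeExpr A), (∀ ψ ∈ l, P ψ) ∧ NDer φ (bigOr l)

namespace DisjOf

variable {P Q : NodeExpr A → Prop} {φ ψ : NodeExpr A}

theorem of_der (h : NDer φ ψ) (hψ : P ψ) : DisjOf P φ :=
  ⟨[ψ], by simpa using hψ, h.trans (NDer.or_bot ψ).symm⟩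

theorem of_der_bot (h : NDer φ botN) : DisjOf P φ := ⟨[], by simp, h⟩

theorem congr (h : NDer φ ψ) (hψ : DisjOf P ψ) : DisjOf P φ :=
  let ⟨l, hl, hψl⟩ := hψ
  ⟨l, hl, h.trans hψl⟩

theorem or (hφ : DisjOf P φ) (hψ : DisjOf P ψ) : DisjOf P (nOr φ ψ) :=
  let ⟨l₁, hl₁, h₁⟩ := hφ
  let ⟨l₂, hl₂, h₂⟩ := hψ
  ⟨l₁ ++ l₂, fun χ hχ => (List.mem_append.1 hχ).elim (hl₁ χ) (hl₂ χ),
    (NDer.or_congr h₁ h₂).trans (NDer.bigOr_append l₁ l₂).symm⟩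

theorem bigOr {l : List (NodeExpr A)} (h : ∀ ψ ∈ l, DisjOf P ψ) : DisjOf P (bigOr l) := by
  induction l with
  | nil => exact of_der_bot (.refl _)
  | cons ψ l ih =>
    exact (h ψ List.mem_cons_self).or (ih fun χ hχ => h χ (List.mem_cons_of_mem ψ hχ))

theorem bind (hφ : DisjOf Q φ) (hQ : ∀ ψ, Q ψ → DisjOf P ψ) : DisjOf P φ :=
  let ⟨_, hl, hφl⟩ := hφ
  congr hφl (bigOr fun ψ hψ => hQ ψ (hl ψ hψ))

theorem conj_right (hφ : DisjOf Q φ) (τ : NodeExpr A) :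
    DisjOf (fun χ => ∃ ψ, Q ψ ∧ χ = .conj ψ τ) (.conj φ τ) :=
  let ⟨l, hl, hφl⟩ := hφ
  ⟨l.map (.conj · τ), fun _ hχ => let ⟨ψ, hψ, hχψ⟩ := List.mem_map.1 hχ; ⟨ψ, hl ψ hψ, hχψ.symm⟩,
    (NDer.congr_conj hφl (.refl τ)).trans (NDer.bigOr_conj l τ)⟩

end DisjOf

theorem disjOf_mkNF (a : A) (D : List (NodeExpr A)) :
    DisjOf (fun χ => ∃ C, C.Sublist D ∧ χ = mkNF a C D) (.lab a) := by
  induction D using List.reverseRecOn with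
  | nil => exact .of_der (.refl _) ⟨[], .slnil, rfl⟩
  | append_singleton D d ih =>
    refine ih.bind ?_
    rintro _ ⟨C, hC, rfl⟩
    by_cases hdD : d ∈ D
    · refine .of_der ?_ ⟨C, hC.trans (List.sublist_append_left D [d]), rfl⟩
      rw [mkNF_append_singleton]
      exact (mkNF_conj_literal a C hdD).symm
    · have hdC : d ∉ C := fun h => hdD (hC.subset h)
      have hmem : ∀ e ∈ D, e ∈ C ↔ e ∈ C ++ [d] := fun e he => by
        simp [show e ≠ d from fun h => hdD (h ▸ he)]
      refine .congr (NDer.split _ d) (.or (.of_der (.refl _) ⟨C ++ [d], hC.append (.refl _), ?_⟩)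
        (.of_der (.refl _) ⟨C, hC.trans (List.sublist_append_left D [d]), ?_⟩))
      · rw [mkNF_append_singleton, mkNF_congr a hmem]
        simp
      · rw [mkNF_append_singleton, if_neg hdC]

noncomputable def diamonds (A : Type) [Fintype A] (n : ℕ) : List (NodeExpr A) :=
  (NF A n).1.flatMap fun α => (NF A n).1.map fun β => .eqTest α β

theorem eqTest_mem_diamonds {n : ℕ} {α β : PathExpr A} (hα : α ∈ Pnf A n) (hβ : β ∈ Pnf A n) :
    .eqTest α β ∈ diamonds A n :=
  List.mem_flatMap.2 ⟨α, hα, List.mem_map.2 ⟨β, hβ, rfl⟩⟩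

theorem NF_succ_snd (n : ℕ) : (NF A (n + 1)).2 =
    ((diamonds A (n + 1)).sublists.flatMap fun C =>
      (Finset.univ : Finset A).toList.map fun a => mkNF a C (diamonds A (n + 1))).filter
      fun φ => decide (NConsistent φ) :=
  rfl

theorem mkNF_mem_Nnf (a : A) {n : ℕ} {C : List (NodeExpr A)} (hC : C.Sublist (diamonds A (n + 1)))
    (hcons : NConsistent (mkNF a C (diamonds A (n + 1)))) :
    mkNF a C (diamonds A (n + 1)) ∈ Nnf A (n + 1) := by
  simp only [Nnf, Set.mem_ofPred_eq, NF_succ_snd, List.mem_filter, List.mem_flatMap,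
    List.mem_sublists, List.mem_map, Finset.mem_toList, Finset.mem_univ, true_and]
  exact ⟨⟨C, hC, a, rfl⟩, decide_eq_true hcons⟩

theorem relabelPath_of_mem_Pnf_succ (a : A) {n : ℕ} {α : PathExpr A} (hα : α ∈ Pnf A (n + 1)) :
    PDer (relabelPath a α) α := by
  simp only [Pnf, NF, Set.mem_ofPred_eq, List.mem_cons, List.mem_flatMap, List.mem_map] at hα
  obtain rfl | ⟨ψ, -, β, -, rfl⟩ := hα
  · exact relabelPath_eps a
  · exact relabelPath_down_comp a _

theorem NConsistent.conj_lab {a : A} {α β : PathExpr A} (hα : PDer (relabelPath a α) α)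
    (hβ : PDer (relabelPath a β) β) (h : NConsistent (.eqTest α β)) :
    NConsistent (.conj (.lab a) (.eqTest α β)) := fun hbot => by
  have hrel := relabel_congr a hbot
  rw [relabel_conj, relabel_eqTest, relabel_lab_self] at hrel
  exact h <| ((NDer.top_conj _).trans (NDer.congr_eqTest hα hβ)).symm.trans
    (hrel.trans (relabel_bot a))

theorem disjOf_conj_mkNF (a : A) {n : ℕ} {C : List (NodeExpr A)} {d : NodeExpr A}
    (hC : C.Sublist (diamonds A (n + 1))) (hd : d ∈ diamonds A (n + 1)) :
    DisjOf (· ∈ Nnf A (n + 1)) (.conj (mkNF a C (diamonds A (n + 1))) d) := by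
  by_cases hdC : d ∈ C
  · by_cases hcons : NConsistent (mkNF a C (diamonds A (n + 1)))
    · exact .of_der (mkNF_conj_of_mem a hd hdC) (mkNF_mem_Nnf a hC hcons)
    · exact .of_der_bot ((mkNF_conj_of_mem a hd hdC).trans (not_not.1 hcons))
  · exact .of_der_bot (mkNF_conj_of_not_mem a hd hdC)

end NormalForm

end XPathMinus

/-- For `n > 0` and a label `a`, any `XP⁻`-consistent diamond `φ ∈ D̂ₙ`
satisfies `XP⁻ ⊢ a ∧ φ ≡ ⋁ᵢ ψᵢ` for some normal forms `ψᵢ ∈ N̂ₙ`. -/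
theorem XPathMinus.diamond_normal_form {A : Type} [Fintype A] (hA : 1 < Fintype.card A)
    (n : ℕ) (hn : 0 < n) (a : A) (φ : NodeExpr A)
    (hφ : φ ∈ Dnf A n) (hc : NConsistent φ) :
    ∃ l : List (NodeExpr A), l ≠ [] ∧ (∀ ψ ∈ l, ψ ∈ Nnf A n) ∧
      NDer (NodeExpr.conj (.lab a) φ) (bigOr l) := by
  obtain ⟨α, hα, β, hβ, rfl⟩ := hφ
  obtain ⟨m, rfl⟩ := Nat.exists_eq_add_one.2 hn
  have hcons : NConsistent (.conj (.lab a) (.eqTest α β)) :=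
    hc.conj_lab (relabelPath_of_mem_Pnf_succ a hα) (relabelPath_of_mem_Pnf_succ a hβ)
  have hdisj : DisjOf (· ∈ Nnf A (m + 1)) (.conj (.lab a) (.eqTest α β)) := by
    refine ((disjOf_mkNF a (diamonds A (m + 1))).conj_right _).bind ?_
    rintro _ ⟨_, ⟨C, hC, rfl⟩, rfl⟩
    exact disjOf_conj_mkNF a hC (eqTest_mem_diamonds hα hβ)
  obtain ⟨l, hl, hder⟩ := hdisj
  refine ⟨l, ?_, hl, hder⟩
  rintro rfl
  exact hcons hder
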